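/- Each of the 3-dimensional nontrivial complex ω-Lie algebras L₁, L₂, A_α (α ∈ ℂ), B, and C_α (α ∈ ℂ, α ≠ 0, −1) is multiplicative: for each of these algebras there exists a ℂ-linear functional τ : ℂ³ → ℂ such that ω(u,v) = τ([u,v]) for all u,v ∈ ℂ³ (explicitly, one may take τ = y* for L₁ and L₂, τ = −z* for A_α, τ = 2x* for B, and τ = (1+α)x* for C_α, where {x*, y*, z*} is the dual basis of {x, y, z}). -/
import Mathlib


noncomputable section

/-- The underlying space ℂ³. -/
abbrev V3 : Type := Fin 3 → ℂ

/-- The basis vector x = e₁. -/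
def vx : V3 := ![1, 0, 0]

/-- The basis vector y = e₂. -/
def vy : V3 := ![0, 1, 0]

/-- The basis vector z = e₃. -/
def vz : V3 := ![0, 0, 1]

/-- An ω-Lie algebra structure `(b, w)` on ℂ³ is multiplicative if there is a ℂ-linear
functional `τ` with `ω(u,v) = τ([u,v])` for all `u, v`. -/
def IsMultiplicative (b : V3 →ₗ[ℂ] V3 →ₗ[ℂ] V3) (w : V3 →ₗ[ℂ] V3 →ₗ[ℂ] ℂ) : Prop :=
  ∃ τ : V3 →ₗ[ℂ] ℂ, ∀ u v : V3, w u v = τ (b u v)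

lemma decomp3 (u : V3) : u = u 0 • vx + u 1 • vy + u 2 • vz := by
  funext i
  fin_cases i <;> simp [vx, vy, vz]

lemma mult_of_basis (b : V3 →ₗ[ℂ] V3 →ₗ[ℂ] V3) (w : V3 →ₗ[ℂ] V3 →ₗ[ℂ] ℂ)
    (hb : ∀ u v : V3, b u v = - b v u) (hw : ∀ u v : V3, w u v = - w v u)
    (τ : V3 →ₗ[ℂ] ℂ)
    (h1 : w vx vy = τ (b vx vy)) (h2 : w vx vz = τ (b vx vz))
    (h3 : w vy vz = τ (b vy vz)) :
    IsMultiplicative b w := by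
  refine ⟨τ, fun u v => ?_⟩
  have hdb : ∀ u : V3, b u u = 0 := by
    intro u
    have h := hb u u
    have h2 : (2 : ℂ) • b u u = 0 := by
      rw [two_smul]; nth_rewrite 1 [h]; simp
    simpa using (smul_eq_zero.mp h2).resolve_left (by norm_num)
  have hdw : ∀ u : V3, w u u = 0 := by
    intro u
    have h := hw u u
    linear_combination h / 2
  rw [decomp3 u, decomp3 v]
  simp only [map_add, map_smul, LinearMap.add_apply, LinearMap.smul_apply, smul_eq_mul,
    hdb, hdw, hb vy vx, hb vz vx, hb vz vy, hw vy vx, hw vz vx, hw vz vy,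
    h1, h2, h3, map_zero, map_neg, smul_neg, mul_zero, mul_neg]
  try ring

/-- Each of the 3-dimensional nontrivial complex ω-Lie algebras
L₁, L₂, A_α (α ∈ ℂ), B and C_α (α ≠ 0, -1) is multiplicative. -/
theorem three_dimensional_omega_lie_algebras_are_multiplicative :
    -- L₁ : [x,y] = y, [x,z] = 0, [y,z] = z; ω(x,y) = 1, ω(x,z) = ω(y,z) = 0
    (∀ (b : V3 →ₗ[ℂ] V3 →ₗ[ℂ] V3) (w : V3 →ₗ[ℂ] V3 →ₗ[ℂ] ℂ),
      (∀ u v : V3, b u v = - b v u) → (∀ u v : V3, w u v = - w v u) →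
      b vx vy = vy → b vx vz = 0 → b vy vz = vz →
      w vx vy = 1 → w vx vz = 0 → w vy vz = 0 →
      IsMultiplicative b w) ∧
    -- L₂ : [x,y] = 0, [x,z] = y, [y,z] = z; ω(x,z) = 1, ω(x,y) = ω(y,z) = 0
    (∀ (b : V3 →ₗ[ℂ] V3 →ₗ[ℂ] V3) (w : V3 →ₗ[ℂ] V3 →ₗ[ℂ] ℂ),
      (∀ u v : V3, b u v = - b v u) → (∀ u v : V3, w u v = - w v u) →
      b vx vy = 0 → b vx vz = vy → b vy vz = vz →
      w vx vy = 0 → w vx vz = 1 → w vy vz = 0 →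
      IsMultiplicative b w) ∧
    -- A_α : [x,y] = x, [x,z] = x + y, [y,z] = z + α•x; ω(x,y) = ω(x,z) = 0, ω(y,z) = -1
    (∀ α : ℂ, ∀ (b : V3 →ₗ[ℂ] V3 →ₗ[ℂ] V3) (w : V3 →ₗ[ℂ] V3 →ₗ[ℂ] ℂ),
      (∀ u v : V3, b u v = - b v u) → (∀ u v : V3, w u v = - w v u) →
      b vx vy = vx → b vx vz = vx + vy → b vy vz = vz + α • vx →
      w vx vy = 0 → w vx vz = 0 → w vy vz = -1 →
      IsMultiplicative b w) ∧
    -- B : [x,y] = y, [x,z] = y + z, [y,z] = x; ω(x,y) = ω(x,z) = 0, ω(y,z) = 2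
    (∀ (b : V3 →ₗ[ℂ] V3 →ₗ[ℂ] V3) (w : V3 →ₗ[ℂ] V3 →ₗ[ℂ] ℂ),
      (∀ u v : V3, b u v = - b v u) → (∀ u v : V3, w u v = - w v u) →
      b vx vy = vy → b vx vz = vy + vz → b vy vz = vx →
      w vx vy = 0 → w vx vz = 0 → w vy vz = 2 →
      IsMultiplicative b w) ∧
    -- C_α (α ≠ 0, -1) : [x,y] = y, [x,z] = α•z, [y,z] = x; ω(x,y) = ω(x,z) = 0,
    -- ω(y,z) = 1 + α
    (∀ α : ℂ, α ≠ 0 → α ≠ -1 →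
      ∀ (b : V3 →ₗ[ℂ] V3 →ₗ[ℂ] V3) (w : V3 →ₗ[ℂ] V3 →ₗ[ℂ] ℂ),
      (∀ u v : V3, b u v = - b v u) → (∀ u v : V3, w u v = - w v u) →
      b vx vy = vy → b vx vz = α • vz → b vy vz = vx →
      w vx vy = 0 → w vx vz = 0 → w vy vz = 1 + α →
      IsMultiplicative b w) := by
  refine ⟨?_, ?_, ?_, ?_, ?_⟩
  · intro b w hb hw b1 b2 b3 w1 w2 w3
    exact mult_of_basis b w hb hw (LinearMap.proj 1)
      (by rw [w1, b1]; simp [vx, vy, vz]) (by rw [w2, b2]; simp [vx, vy, vz]) (by rw [w3, b3]; simp [vx, vy, vz])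
  · intro b w hb hw b1 b2 b3 w1 w2 w3
    exact mult_of_basis b w hb hw (LinearMap.proj 1)
      (by rw [w1, b1]; simp [vx, vy, vz]) (by rw [w2, b2]; simp [vx, vy, vz]) (by rw [w3, b3]; simp [vx, vy, vz])
  · intro α b w hb hw b1 b2 b3 w1 w2 w3
    exact mult_of_basis b w hb hw (-(LinearMap.proj 2))
      (by rw [w1, b1]; simp [vx, vy, vz]) (by rw [w2, b2]; simp [vx, vy, vz]) (by rw [w3, b3]; simp [vx, vy, vz])
  · intro b w hb hw b1 b2 b3 w1 w2 w3
    exact mult_of_basis b w hb hw ((2 : ℂ) • LinearMap.proj 0)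
      (by rw [w1, b1]; simp [vx, vy, vz]) (by rw [w2, b2]; simp [vx, vy, vz]) (by rw [w3, b3]; simp [vx, vy, vz])
  · intro α hα0 hα1 b w hb hw b1 b2 b3 w1 w2 w3
    exact mult_of_basis b w hb hw ((1 + α) • LinearMap.proj 0)
      (by rw [w1, b1]; simp [vx, vy, vz]) (by rw [w2, b2]; simp [vx, vy, vz]) (by rw [w3, b3]; simp [vx, vy, vz])
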